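/- The following relations hold among the tree automorphisms: the commutators [d, a⁻¹da] and [d, ada⁻¹] are both the identity automorphism; that is, d commutes with each of its conjugates a⁻¹da and ada⁻¹. -/

import Mathlib

namespace BVTree

/-- States of the automaton (generators, their inverses, and the identity). -/
inductive Q : Type
  | e | qa | qb | qc | qd | qa' | qb' | qc' | qd'
  deriving DecidableEq

open Q

/-- Output function of the automaton. -/
def Qout : Q → Bool → Bool
  | qa, x => !x
  | qa', x => !x
  | _, x => x

/-- Transition function of the automaton. -/
def Qtrans : Q → Bool → Q
  | qa, false => qd
  | qa, true => e
  | qb, false => qa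
  | qb, true => qc
  | qc, _ => qa
  | qd, false => e
  | qd, true => qb
  | qa', false => e
  | qa', true => qd'
  | qb', false => qa'
  | qb', true => qc'
  | qc', _ => qa'
  | qd', false => e
  | qd', true => qb'
  | e, _ => e

/-- The state corresponding to the inverse automorphism. -/
def Qinv : Q → Q
  | e => e
  | qa => qa' | qb => qb' | qc => qc' | qd => qd'
  | qa' => qa | qb' => qb | qc' => qc | qd' => qd

/-- The action of a state on finite binary words. -/
def act : Q → List Bool → List Bool
  | _, [] => []
  | q, x :: w => Qout q x :: act (Qtrans q x) w

lemma act_inv (q : Q) : ∀ w, act (Qinv q) (act q w) = w := by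
  intro w
  induction w generalizing q with
  | nil => rfl
  | cons x w ih =>
    have h1 : Qout (Qinv q) (Qout q x) = x := by cases q <;> cases x <;> rfl
    have h2 : Qtrans (Qinv q) (Qout q x) = Qinv (Qtrans q x) := by
      cases q <;> cases x <;> rfl
    simp [act, h1, h2, ih]

/-- The tree automorphism determined by a state of the automaton. -/
def aut (q : Q) : Equiv.Perm (List Bool) where
  toFun := act q
  invFun := act (Qinv q)
  left_inv := act_inv q
  right_inv := by
    intro w
    have h : Qinv (Qinv q) = q := by cases q <;> rfl
    simpa [h] using act_inv (Qinv q) w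

/-- The automorphism `a`: `a(0w) = 1·d(w)`, `a(1w) = 0·w`. -/
def a : Equiv.Perm (List Bool) := aut qa
/-- The automorphism `b`: `b(0w) = 0·a(w)`, `b(1w) = 1·c(w)`. -/
def b : Equiv.Perm (List Bool) := aut qb
/-- The automorphism `c`: `c(0w) = 0·a(w)`, `c(1w) = 1·a(w)`. -/
def c : Equiv.Perm (List Bool) := aut qc
/-- The automorphism `d`: `d(0w) = 0·w`, `d(1w) = 1·b(w)`. -/
def d : Equiv.Perm (List Bool) := aut qd

/-- The group `G` generated by `a`, `b`, `c`, `d`. -/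
def G : Subgroup (Equiv.Perm (List Bool)) := Subgroup.closure {a, b, c, d}

/-
In wreath-recursion notation, `d = (1, b)` acts only below the vertex `1`, while
`a⁻¹da = (d⁻¹bd, 1)` and `ada⁻¹ = (b, 1)` act only below the vertex `0`.
Permutations with disjoint supports commute, so both commutators are trivial.
-/

open Equiv

lemma act_e (w : List Bool) : act e w = w := by
  induction w with
  | nil => rfl
  | cons x w ih => simp [act, Qout, Qtrans, ih]

lemma aut_nil (q : Q) : aut q [] = [] := rfl

lemma d_apply_false_cons (w : List Bool) : d (false :: w) = false :: w :=
  congrArg (false :: ·) (act_e w)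

lemma inv_mul_d_mul_a_apply_true_cons (w : List Bool) :
    (a⁻¹ * d * a) (true :: w) = true :: w := by
  change act qa' (act qd (false :: act e w)) = true :: w
  simp only [act, Qout, Qtrans, act_e, Bool.not_false]

lemma a_mul_d_mul_inv_apply_true_cons (w : List Bool) :
    (a * d * a⁻¹) (true :: w) = true :: w := by
  change act qa (act qd (false :: act qd' w)) = true :: w
  simp only [act, Qout, Qtrans, act_e, Bool.not_false]
  exact congrArg (true :: ·) (act_inv qd' w)

lemma Perm.disjoint_of_fixes_cons {α : Type*} {f g : Perm (List α)} (x : α)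
    (hf_nil : f [] = []) (hf : ∀ y ≠ x, ∀ w, f (y :: w) = y :: w)
    (hg : ∀ w, g (x :: w) = x :: w) : f.Disjoint g := by
  rintro (_ | ⟨y, w⟩)
  · exact .inl hf_nil
  · by_cases hy : y = x
    · exact .inr (hy ▸ hg w)
    · exact .inl (hf y hy w)

lemma inv_mul_inv_mul_mul_eq_one_of_commute {G : Type*} [Group G] {x y : G}
    (h : Commute x y) : x⁻¹ * y⁻¹ * x * y = 1 := by
  simpa [commutatorElement_def] using commutatorElement_eq_one_iff_commute.mpr h.inv_inv

lemma d_disjoint_of_fixes_true_cons {g : Perm (List Bool)}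
    (hg : ∀ w, g (true :: w) = true :: w) : d.Disjoint g :=
  Perm.disjoint_of_fixes_cons true (aut_nil qd)
    (fun y hy w => by rw [Bool.eq_false_iff.mpr hy, d_apply_false_cons]) hg

/-- `d` commutes with its conjugates `a⁻¹da` and `ada⁻¹`
(the commutators `[d, a⁻¹da]` and `[d, ada⁻¹]`, with `[x,y] = x⁻¹y⁻¹xy`, are trivial). -/
theorem d_commutes_with_conjugates :
    d⁻¹ * (a⁻¹ * d * a)⁻¹ * d * (a⁻¹ * d * a) = 1 ∧
    d⁻¹ * (a * d * a⁻¹)⁻¹ * d * (a * d * a⁻¹) = 1 :=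
  ⟨inv_mul_inv_mul_mul_eq_one_of_commute
      (d_disjoint_of_fixes_true_cons inv_mul_d_mul_a_apply_true_cons).commute,
    inv_mul_inv_mul_mul_eq_one_of_commute
      (d_disjoint_of_fixes_true_cons a_mul_d_mul_inv_apply_true_cons).commute⟩

end BVTree
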